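/- arXiv:1212.0051 — 5 statements merged into one kernel-verified Lean document; each statement's English description precedes it below -/
import Mathlib

section
/- Let δ ≥ 0 and let X be a δ-hyperbolic geodesic metric space. Let ζ be a geodesic segment in X, let x be a point of X, and let x' be a nearest point to x on ζ. Then for every point w ∈ ζ and every geodesic segment σ with endpoints x and w, σ meets the closed 3δ-neighborhood of x'; that is, there exists p ∈ σ with dist p x' ≤ 3δ. (Proposition 5.3(i) of the paper.) -/
open Set Metric


/-- A subset `G` of a metric space is a geodesic segment with endpoints `x` and `y`
if it is the image of an isometric parametrization of a real interval `[a,b]`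
with `γ a = x` and `γ b = y`. -/
def IsGeodesicSegmentBetween {X : Type*} [MetricSpace X] (G : Set X) (x y : X) : Prop :=
  ∃ (a b : ℝ) (γ : ℝ → X), a ≤ b ∧
    (∀ s ∈ Set.Icc a b, ∀ t ∈ Set.Icc a b, dist (γ s) (γ t) = |s - t|) ∧
    γ '' Set.Icc a b = G ∧ γ a = x ∧ γ b = y

/-- A geodesic segment is a geodesic segment between some pair of endpoints. -/
def IsGeodesicSegment {X : Type*} [MetricSpace X] (G : Set X) : Prop :=
  ∃ x y : X, IsGeodesicSegmentBetween G x y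

/-- A metric space is geodesic if any two points are the endpoints of some
geodesic segment. -/
def GeodesicMetricSpace (X : Type*) [MetricSpace X] : Prop :=
  ∀ x y : X, ∃ G : Set X, IsGeodesicSegmentBetween G x y

/-- `δ`-hyperbolicity via thin triangles: each side of any geodesic triangle is
contained in the closed `δ`-neighborhood of the union of the other two sides. -/
def IsDeltaHyperbolic (X : Type*) [MetricSpace X] (δ : ℝ) : Prop :=
  ∀ (x y z : X) (G₁ G₂ G₃ : Set X),
    IsGeodesicSegmentBetween G₁ x y → IsGeodesicSegmentBetween G₂ y z →
      IsGeodesicSegmentBetween G₃ x z →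
        (∀ p ∈ G₁, ∃ q ∈ G₂ ∪ G₃, dist p q ≤ δ) ∧
        (∀ p ∈ G₂, ∃ q ∈ G₁ ∪ G₃, dist p q ≤ δ) ∧
        (∀ p ∈ G₃, ∃ q ∈ G₁ ∪ G₂, dist p q ≤ δ)

/-- `a` is a nearest point to `x` on the subset `A`. -/
def IsNearestPointOn {X : Type*} [MetricSpace X] (x : X) (A : Set X) (a : X) : Prop :=
  a ∈ A ∧ ∀ p ∈ A, dist x a ≤ dist x p

lemma geod_symm {X : Type*} [MetricSpace X] {G : Set X} {x y : X}
    (h : IsGeodesicSegmentBetween G x y) : IsGeodesicSegmentBetween G y x := by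
  obtain ⟨a, b, γ, hab, hiso, himg, hga, hgb⟩ := h
  refine ⟨a, b, fun u => γ (a + b - u), hab, ?_, ?_, by simpa using hgb, by simpa using hga⟩
  · intro s hs t ht
    rw [hiso _ ⟨by linarith [hs.2], by linarith [hs.1]⟩ _
      ⟨by linarith [ht.2], by linarith [ht.1]⟩]
    have : a + b - s - (a + b - t) = t - s := by ring
    rw [this, abs_sub_comm]
  · rw [← himg]
    have : (fun u => γ (a + b - u)) '' Icc a b = γ '' ((fun u => a + b - u) '' Icc a b) := by
      rw [Set.image_image]
    rw [this]
    congr 1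
    have := Set.image_const_sub_Icc (a + b) a b
    simpa using this

lemma geod_subseg {X : Type*} [MetricSpace X] {a b : ℝ} {γ : ℝ → X}
    (hiso : ∀ s ∈ Set.Icc a b, ∀ t ∈ Set.Icc a b, dist (γ s) (γ t) = |s - t|)
    {s t : ℝ} (hs : s ∈ Set.Icc a b) (ht : t ∈ Set.Icc a b) (hst : s ≤ t) :
    IsGeodesicSegmentBetween (γ '' Set.Icc s t) (γ s) (γ t) :=
  ⟨s, t, γ, hst, fun p hp q hq =>
    hiso p ⟨hs.1.trans hp.1, hp.2.trans ht.2⟩ q ⟨hs.1.trans hq.1, hq.2.trans ht.2⟩,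
    rfl, rfl, rfl⟩

lemma geod_compact {X : Type*} [MetricSpace X] {G : Set X} {x y : X}
    (h : IsGeodesicSegmentBetween G x y) : IsCompact G := by
  obtain ⟨a, b, γ, hab, hiso, himg, hga, hgb⟩ := h
  rw [← himg]
  refine isCompact_Icc.image_of_continuousOn ?_
  refine (LipschitzOnWith.of_dist_le_mul (K := 1) fun p hp q hq => ?_).continuousOn
  rw [hiso p hp q hq, Real.dist_eq]
  simp

lemma geod_add {X : Type*} [MetricSpace X] {G : Set X} {x y : X}
    (h : IsGeodesicSegmentBetween G x y) : ∀ q ∈ G, dist x q + dist q y = dist x y := by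
  obtain ⟨a, b, γ, hab, hiso, himg, hga, hgb⟩ := h
  intro q hq
  rw [← himg] at hq
  obtain ⟨u, hu, rfl⟩ := hq
  subst hga hgb
  rw [hiso a ⟨le_refl a, hab⟩ u hu, hiso u hu b ⟨hab, le_refl b⟩,
    hiso a ⟨le_refl a, hab⟩ b ⟨hab, le_refl b⟩,
    abs_of_nonpos (by linarith [hu.1]), abs_of_nonpos (by linarith [hu.2]),
    abs_of_nonpos (by linarith)]
  ring

lemma geod_left_mem {X : Type*} [MetricSpace X] {G : Set X} {x y : X}
    (h : IsGeodesicSegmentBetween G x y) : x ∈ G := by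
  obtain ⟨a, b, γ, hab, hiso, himg, hga, hgb⟩ := h
  rw [← himg, ← hga]
  exact ⟨a, ⟨le_refl a, hab⟩, rfl⟩

/-- Proposition 5.3(i): any geodesic from `x` to a point `w` of the segment `ζ`
passes within `3δ` of a nearest point `x'` to `x` on `ζ`. -/
theorem geodesic_to_segment_meets_nbhd_of_projection
    {X : Type*} [MetricSpace X] (δ : ℝ) (hδ : 0 ≤ δ)
    (hgeo : GeodesicMetricSpace X) (hhyp : IsDeltaHyperbolic X δ)
    (ζ : Set X) (hζ : IsGeodesicSegment ζ)
    (x x' : X) (hx' : IsNearestPointOn x ζ x')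
    (w : X) (hw : w ∈ ζ)
    (σ : Set X) (hσ : IsGeodesicSegmentBetween σ x w) :
    ∃ p ∈ σ, dist p x' ≤ 3 * δ := by
  obtain ⟨u, v, a, b, γζ, hab, hisoζ, himgζ, hga, hgb⟩ := hζ
  obtain ⟨hx'mem, hx'near⟩ := hx'
  have hx'mem' := hx'mem
  rw [← himgζ] at hx'mem' hw
  obtain ⟨s, hs, hgs⟩ := hx'mem'
  obtain ⟨t, ht, hgt⟩ := hw
  -- subsegment of ζ from x' to w
  set ζ' : Set X := γζ '' Set.Icc (min s t) (max s t) with hζ'def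
  have hζ'sub : ζ' ⊆ ζ := by
    rw [← himgζ]
    exact Set.image_mono (Set.Icc_subset_Icc (le_min hs.1 ht.1) (max_le hs.2 ht.2))
  have hζ' : IsGeodesicSegmentBetween ζ' x' w := by
    rcases le_total s t with hst | hst
    · rw [hζ'def, min_eq_left hst, max_eq_right hst, ← hgs, ← hgt]
      exact geod_subseg hisoζ hs ht hst
    · rw [hζ'def, min_eq_right hst, max_eq_left hst, ← hgs, ← hgt]
      exact geod_symm (geod_subseg hisoζ ht hs hst)
  have hwζ' : w ∈ ζ' := geod_left_mem (geod_symm hζ')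
  -- geodesic from x to x'
  obtain ⟨G, hG⟩ := hgeo x x'
  have hGc : IsCompact G := geod_compact hG
  have hζ'c : IsCompact ζ' := geod_compact hζ'
  have hGne : G.Nonempty := ⟨x, geod_left_mem hG⟩
  have hζ'ne : ζ'.Nonempty := ⟨w, hwζ'⟩
  -- thinness of the triangle x, x', w
  obtain ⟨-, -, hthin⟩ := hhyp x x' w G ζ' σ hG hζ' hσ
  -- parametrize σ and find a point close to both G and ζ'
  obtain ⟨c, e, γσ, hce, hisoσ, himgσ, hgc, hge⟩ := hσ
  have hcont : ContinuousOn γσ (Set.Icc c e) := by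
    refine (LipschitzOnWith.of_dist_le_mul (K := 1) fun p hp q hq => ?_).continuousOn
    rw [hisoσ p hp q hq, Real.dist_eq]; simp
  set A : Set ℝ := Set.Icc c e ∩ (fun r => infDist (γσ r) G) ⁻¹' Set.Iic δ with hAdef
  set B : Set ℝ := Set.Icc c e ∩ (fun r => infDist (γσ r) ζ') ⁻¹' Set.Iic δ with hBdef
  have hAcl : IsClosed A :=
    ContinuousOn.preimage_isClosed_of_isClosed
      ((continuous_infDist_pt G).comp_continuousOn hcont) isClosed_Icc isClosed_Iic
  have hBcl : IsClosed B :=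
    ContinuousOn.preimage_isClosed_of_isClosed
      ((continuous_infDist_pt ζ').comp_continuousOn hcont) isClosed_Icc isClosed_Iic
  have hcover : Set.Icc c e ⊆ A ∪ B := by
    intro r hr
    have hmem : γσ r ∈ σ := by rw [← himgσ]; exact ⟨r, hr, rfl⟩
    obtain ⟨q, hq, hdq⟩ := hthin (γσ r) hmem
    rcases hq with hq | hq
    · exact Or.inl ⟨hr, le_trans (infDist_le_dist_of_mem hq) hdq⟩
    · exact Or.inr ⟨hr, le_trans (infDist_le_dist_of_mem hq) hdq⟩
  have hAne : (Set.Icc c e ∩ A).Nonempty := by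
    refine ⟨c, ⟨le_refl c, hce⟩, ⟨le_refl c, hce⟩, ?_⟩
    show infDist (γσ c) G ≤ δ
    rw [hgc, infDist_zero_of_mem (geod_left_mem hG)]
    exact hδ
  have hBne : (Set.Icc c e ∩ B).Nonempty := by
    refine ⟨e, ⟨hce, le_refl e⟩, ⟨hce, le_refl e⟩, ?_⟩
    show infDist (γσ e) ζ' ≤ δ
    rw [hge, infDist_zero_of_mem hwζ']
    exact hδ
  obtain ⟨r, hrIcc, hrA, hrB⟩ :=
    isPreconnected_closed_iff.mp isPreconnected_Icc A B hAcl hBcl hcover hAne hBne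
  set y : X := γσ r with hydef
  have hyσ : y ∈ σ := by rw [← himgσ]; exact ⟨r, hrIcc, rfl⟩
  obtain ⟨qa, hqa, hqad⟩ := hGc.exists_infDist_eq_dist hGne y
  obtain ⟨qb, hqb, hqbd⟩ := hζ'c.exists_infDist_eq_dist hζ'ne y
  have hya : dist y qa ≤ δ := by rw [← hqad]; exact hrA.2
  have hyb : dist y qb ≤ δ := by rw [← hqbd]; exact hrB.2
  have h1 : dist x qa + dist qa x' = dist x x' := geod_add hG qa hqa
  have h2 : dist x x' ≤ dist x qb := hx'near qb (hζ'sub hqb)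
  have h3 : dist x qb ≤ dist x qa + dist qa y + dist y qb := by
    calc dist x qb ≤ dist x qa + dist qa qb := dist_triangle _ _ _
    _ ≤ dist x qa + (dist qa y + dist y qb) := by
        gcongr; exact dist_triangle _ _ _
    _ = dist x qa + dist qa y + dist y qb := by ring
  have hqay : dist qa y = dist y qa := dist_comm _ _
  have hfin : dist y x' ≤ 3 * δ := by
    have := dist_triangle y qa x'
    linarith [hya, hyb]
  exact ⟨y, hyσ, hfin⟩
end

section
/- Let δ ≥ 0 and let X be a δ-hyperbolic geodesic metric space. Let ζ be a geodesic segment in X, let x and y be points of X, let x' be a nearest point to x on ζ and let y' be a nearest point to y on ζ. If dist x' y' > 14δ, then dist x x' + dist x' y' + dist y' y ≤ dist x y + 24δ. (Proposition 5.3(iii) of the paper, the 'tree-like' inequality.) -/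
lemma IsGeodesicSegmentBetween.symm {X : Type*} [MetricSpace X] {G : Set X} {p q : X}
    (h : IsGeodesicSegmentBetween G p q) : IsGeodesicSegmentBetween G q p := by
  obtain ⟨a, b, γ, hab, hiso, him, ha, hb⟩ := h
  refine ⟨a, b, fun t => γ (a + b - t), hab, ?_, ?_, ?_, ?_⟩
  · intro s hs t ht
    have hs' : a + b - s ∈ Set.Icc a b := ⟨by linarith [hs.2], by linarith [hs.1]⟩
    have ht' : a + b - t ∈ Set.Icc a b := ⟨by linarith [ht.2], by linarith [ht.1]⟩
    rw [hiso _ hs' _ ht', show (a + b - s) - (a + b - t) = t - s by ring, abs_sub_comm]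
  · rw [← him]
    ext z
    simp only [Set.mem_image]
    constructor
    · rintro ⟨t, ht, rfl⟩
      exact ⟨a + b - t, ⟨by linarith [ht.2], by linarith [ht.1]⟩, rfl⟩
    · rintro ⟨t, ht, rfl⟩
      exact ⟨a + b - t, ⟨by linarith [ht.2], by linarith [ht.1]⟩,
        by rw [show a + b - (a + b - t) = t by ring]⟩
  · show γ (a + b - a) = q
    rw [show a + b - a = b by ring]; exact hb
  · show γ (a + b - b) = p
    rw [show a + b - b = a by ring]; exact ha

lemma IsGeodesicSegmentBetween.dist_add {X : Type*} [MetricSpace X] {G : Set X} {p q : X}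
    (h : IsGeodesicSegmentBetween G p q) {z : X} (hz : z ∈ G) :
    dist p z + dist z q = dist p q := by
  obtain ⟨a, b, γ, hab, hiso, him, ha, hb⟩ := h
  rw [← him] at hz
  obtain ⟨u, hu, rfl⟩ := hz
  have haa : a ∈ Set.Icc a b := ⟨le_refl _, hab⟩
  have hbb : b ∈ Set.Icc a b := ⟨hab, le_refl _⟩
  rw [← ha, ← hb, hiso a haa u hu, hiso u hu b hbb, hiso a haa b hbb,
    abs_of_nonpos (by linarith [hu.1] : a - u ≤ 0),
    abs_of_nonpos (by linarith [hu.2] : u - b ≤ 0),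
    abs_of_nonpos (by linarith : a - b ≤ 0)]
  ring

lemma IsGeodesicSegmentBetween.exists_point {X : Type*} [MetricSpace X] {G : Set X} {p q : X}
    (h : IsGeodesicSegmentBetween G p q) {r : ℝ} (h0 : 0 ≤ r) (hr : r ≤ dist p q) :
    ∃ m ∈ G, dist p m = r ∧ dist m q = dist p q - r := by
  obtain ⟨a, b, γ, hab, hiso, him, ha, hb⟩ := h
  have haa : a ∈ Set.Icc a b := ⟨le_refl _, hab⟩
  have hbb : b ∈ Set.Icc a b := ⟨hab, le_refl _⟩
  have hd : dist p q = b - a := by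
    rw [← ha, ← hb, hiso a haa b hbb, abs_of_nonpos (by linarith : a - b ≤ 0)]; ring
  have hmem : a + r ∈ Set.Icc a b := ⟨by linarith, by rw [hd] at hr; linarith⟩
  refine ⟨γ (a + r), ?_, ?_, ?_⟩
  · rw [← him]; exact ⟨a + r, hmem, rfl⟩
  · rw [← ha, hiso a haa _ hmem, abs_of_nonpos (by linarith : a - (a + r) ≤ 0)]; ring
  · rw [hd, ← hb, hiso _ hmem b hbb, abs_of_nonpos (by rw [hd] at hr; linarith : a + r - b ≤ 0)]
    ring

lemma exists_subsegment {X : Type*} [MetricSpace X] {ζ : Set X} (hζ : IsGeodesicSegment ζ)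
    {p q : X} (hp : p ∈ ζ) (hq : q ∈ ζ) :
    ∃ G, G ⊆ ζ ∧ IsGeodesicSegmentBetween G p q := by
  obtain ⟨e, f, a, b, γ, hab, hiso, him, ha, hb⟩ := hζ
  rw [← him] at hp hq
  obtain ⟨s, hs, rfl⟩ := hp
  obtain ⟨t, ht, rfl⟩ := hq
  have key : ∀ u v : ℝ, u ∈ Set.Icc a b → v ∈ Set.Icc a b → u ≤ v →
      ∃ G, G ⊆ ζ ∧ IsGeodesicSegmentBetween G (γ u) (γ v) := by
    intro u v hu hv huv
    refine ⟨γ '' Set.Icc u v, ?_, u, v, γ, huv, ?_, rfl, rfl, rfl⟩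
    · rw [← him]; exact Set.image_mono (Set.Icc_subset_Icc hu.1 hv.2)
    · intro s' hs' t' ht'
      exact hiso s' ⟨le_trans hu.1 hs'.1, le_trans hs'.2 hv.2⟩
        t' ⟨le_trans hu.1 ht'.1, le_trans ht'.2 hv.2⟩
  rcases le_total s t with hst | hst
  · exact key s t hs ht hst
  · obtain ⟨G, hG, hG'⟩ := key t s ht hs hst
    exact ⟨G, hG, hG'.symm⟩

lemma proj_ineq {X : Type*} [MetricSpace X] {δ : ℝ} (hδ : 0 ≤ δ)
    (hgeo : GeodesicMetricSpace X) (hhyp : IsDeltaHyperbolic X δ)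
    {ζ : Set X} (hζ : IsGeodesicSegment ζ)
    {x x' : X} (hx' : IsNearestPointOn x ζ x')
    {z : X} (hz : z ∈ ζ) :
    dist x x' + dist x' z ≤ dist x z + 4 * δ := by
  obtain ⟨hx'mem, hx'near⟩ := hx'
  rcases le_or_gt (dist x' z) (4 * δ) with hle | hgt
  · linarith [hx'near z hz]
  refine le_of_forall_pos_le_add fun ε hε => ?_
  have hr0 : (0:ℝ) ≤ min (2 * δ + ε) (dist x' z) := le_min (by linarith) dist_nonneg
  have hr2δ : 2 * δ < min (2 * δ + ε) (dist x' z) := lt_min (by linarith) (by linarith)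
  have hrle : min (2 * δ + ε) (dist x' z) ≤ dist x' z := min_le_right _ _
  have hrε : min (2 * δ + ε) (dist x' z) ≤ 2 * δ + ε := min_le_left _ _
  obtain ⟨G2, hG2sub, hG2⟩ := exists_subsegment hζ hx'mem hz
  obtain ⟨m, hmG2, hm1, hm2⟩ := hG2.exists_point hr0 hrle
  obtain ⟨G1, hG1⟩ := hgeo x x'
  obtain ⟨G3, hG3⟩ := hgeo x z
  obtain ⟨_, h2, _⟩ := hhyp x x' z G1 G2 G3 hG1 hG2 hG3
  obtain ⟨w, hw, hdw⟩ := h2 m hmG2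
  have hmζ : m ∈ ζ := hG2sub hmG2
  have hxm : dist x x' ≤ dist x m := hx'near m hmζ
  rcases hw with hw1 | hw3
  · exfalso
    have hsum : dist x w + dist w x' = dist x x' := hG1.dist_add hw1
    have t1 := dist_triangle x w m
    have t2 := dist_triangle x' w m
    have dc1 : dist m w = dist w m := dist_comm _ _
    have dc2 : dist x' w = dist w x' := dist_comm _ _
    -- dist w x' ≤ δ, so dist x' m ≤ 2δ, contradicting dist x' m = r > 2δ
    linarith
  · have hsum : dist x w + dist w z = dist x z := hG3.dist_add hw3
    have t1 := dist_triangle x w m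
    have t2 := dist_triangle m w z
    have dc1 : dist m w = dist w m := dist_comm _ _
    linarith


/-- Proposition 5.3(iii) (tree-like inequality): if the projections `x'`, `y'`
of `x`, `y` on a geodesic segment `ζ` are at distance more than `14δ`, then
`dist x x' + dist x' y' + dist y' y ≤ dist x y + 24δ`. -/
theorem tree_like_inequality
    {X : Type*} [MetricSpace X] (δ : ℝ) (hδ : 0 ≤ δ)
    (hgeo : GeodesicMetricSpace X) (hhyp : IsDeltaHyperbolic X δ)
    (ζ : Set X) (hζ : IsGeodesicSegment ζ)
    (x y x' y' : X)
    (hx' : IsNearestPointOn x ζ x') (hy' : IsNearestPointOn y ζ y')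
    (hfar : dist x' y' > 14 * δ) :
    dist x x' + dist x' y' + dist y' y ≤ dist x y + 24 * δ := by
  obtain ⟨G2, hG2sub, hG2⟩ := exists_subsegment hζ hx'.1 hy'.1
  have hr0 : (0:ℝ) ≤ dist x' y' / 2 := by positivity
  obtain ⟨m, hmG2, hm1, hm2⟩ := hG2.exists_point hr0 (by linarith [dist_nonneg (x := x') (y := y')] : dist x' y' / 2 ≤ dist x' y')
  have hmζ : m ∈ ζ := hG2sub hmG2
  have hm2' : dist m y' = dist x' y' / 2 := by rw [hm2]; ring
  obtain ⟨Gxx', hGxx'⟩ := hgeo x x'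
  obtain ⟨Gxy', hGxy'⟩ := hgeo x y'
  obtain ⟨Gy'y, hGy'y⟩ := hgeo y' y
  obtain ⟨Gxy, hGxy⟩ := hgeo x y
  -- Triangle (x, x', y'): m on [x',y'] is δ-close to [x,x'] ∪ [x,y']
  obtain ⟨_, hA, _⟩ := hhyp x x' y' Gxx' G2 Gxy' hGxx' hG2 hGxy'
  obtain ⟨w, hw, hdw⟩ := hA m hmG2
  have hw3 : w ∈ Gxy' := by
    rcases hw with hw1 | hw3
    · exfalso
      have hsum : dist x w + dist w x' = dist x x' := hGxx'.dist_add hw1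
      have hxm : dist x x' ≤ dist x m := hx'.2 m hmζ
      have t1 := dist_triangle x w m
      have t2 := dist_triangle x' w m
      have dc1 : dist m w = dist w m := dist_comm _ _
      have dc2 : dist x' w = dist w x' := dist_comm _ _
      -- get dist x' m ≤ 2δ but dist x' m = dist x' y'/2 > 7δ
      linarith
    · exact hw3
  -- Triangle (x, y', y): w on [x,y'] is δ-close to [y',y] ∪ [x,y]
  obtain ⟨hB, _, _⟩ := hhyp x y' y Gxy' Gy'y Gxy hGxy' hGy'y hGxy
  obtain ⟨u, hu, hdu⟩ := hB w hw3
  have hu3 : u ∈ Gxy := by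
    rcases hu with hu2 | hu3
    · exfalso
      have hsum : dist y' u + dist u y = dist y' y := hGy'y.dist_add hu2
      have hym : dist y y' ≤ dist y m := hy'.2 m hmζ
      have t1 := dist_triangle y u m
      have t2 := dist_triangle u w m
      have t3 := dist_triangle y' u m
      have dc1 : dist u m = dist m u := dist_comm _ _
      have dc2 : dist y u = dist u y := dist_comm _ _
      have dc3 : dist m w = dist w m := dist_comm _ _
      have dc4 : dist w u = dist u w := dist_comm _ _
      have dc5 : dist y y' = dist y' y := dist_comm _ _
      have dc6 : dist y' m = dist m y' := dist_comm _ _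
      -- dist y' u ≤ 2δ so dist y' m ≤ 4δ, contradicting > 7δ
      linarith
    · exact hu3
  have hsum : dist x u + dist u y = dist x y := hGxy.dist_add hu3
  have hmu : dist m u ≤ 2 * δ := by
    have := dist_triangle m w u
    linarith [dist_comm w u ▸ hdu]
  have hx'' : dist x x' + dist x' m ≤ dist x m + 4 * δ := proj_ineq hδ hgeo hhyp hζ hx' hmζ
  have hy'' : dist y y' + dist y' m ≤ dist y m + 4 * δ := proj_ineq hδ hgeo hhyp hζ hy' hmζ
  have t1 := dist_triangle x u m
  have t2 := dist_triangle y u m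
  have dc1 : dist m u = dist u m := dist_comm _ _
  have dc2 : dist y' m = dist m y' := dist_comm _ _
  have dc3 : dist y y' = dist y' y := dist_comm _ _
  have dc4 : dist y m = dist m y := dist_comm _ _
  have dc5 : dist u y = dist y u := dist_comm _ _
  linarith
end

section
/- Let δ ≥ 0 and let X be a δ-hyperbolic geodesic metric space. Let ζ be a geodesic segment in X, let z be a point of X, and let z' be a nearest point to z on ζ. Let x ∈ ζ, let σ be a geodesic segment with endpoints z and z', and let x' be a nearest point to x on σ. Then dist z' x' ≤ 6δ. (Lemma 5.4 of the paper.) -/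
open Metric Set

lemma geo_mem_left {X : Type*} [MetricSpace X] {G : Set X} {u v : X}
    (h : IsGeodesicSegmentBetween G u v) : u ∈ G := by
  obtain ⟨a, b, γ, hab, _, him, ha, _⟩ := h
  exact him ▸ ⟨a, ⟨le_refl a, hab⟩, ha⟩

lemma geo_mem_right {X : Type*} [MetricSpace X] {G : Set X} {u v : X}
    (h : IsGeodesicSegmentBetween G u v) : v ∈ G := by
  obtain ⟨a, b, γ, hab, _, him, _, hb⟩ := h
  exact him ▸ ⟨b, ⟨hab, le_refl b⟩, hb⟩

lemma geo_dist_add {X : Type*} [MetricSpace X] {G : Set X} {u v : X}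
    (h : IsGeodesicSegmentBetween G u v) {p : X} (hp : p ∈ G) :
    dist u p + dist p v = dist u v := by
  obtain ⟨a, b, γ, hab, hiso, him, ha, hb⟩ := h
  rw [← him] at hp
  obtain ⟨s, hs, rfl⟩ := hp
  have h1 := hiso a ⟨le_refl a, hab⟩ s hs
  have h2 := hiso s hs b ⟨hab, le_refl b⟩
  have h3 := hiso a ⟨le_refl a, hab⟩ b ⟨hab, le_refl b⟩
  rw [ha] at h1 h3; rw [hb] at h2 h3
  rw [h1, h2, h3, abs_of_nonpos (by linarith [hs.1, hs.2] : a - s ≤ 0),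
    abs_of_nonpos (by linarith [hs.1, hs.2] : s - b ≤ 0),
    abs_of_nonpos (by linarith : a - b ≤ 0)]
  ring

lemma iso_continuousOn {X : Type*} [MetricSpace X] {γ : ℝ → X} {a b : ℝ}
    (hiso : ∀ s ∈ Set.Icc a b, ∀ t ∈ Set.Icc a b, dist (γ s) (γ t) = |s - t|) :
    ContinuousOn γ (Set.Icc a b) := by
  apply LipschitzOnWith.continuousOn (K := 1)
  apply LipschitzOnWith.of_dist_le_mul
  intro s hs t ht
  rw [hiso s hs t ht, Real.dist_eq]
  simp

lemma geo_compact {X : Type*} [MetricSpace X] {G : Set X} {u v : X}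
    (h : IsGeodesicSegmentBetween G u v) : IsCompact G := by
  obtain ⟨a, b, γ, hab, hiso, him, _, _⟩ := h
  rw [← him]
  exact isCompact_Icc.image_of_continuousOn (iso_continuousOn hiso)

lemma geo_subsegment {X : Type*} [MetricSpace X] {G : Set X}
    (h : IsGeodesicSegment G) {p q : X} (hp : p ∈ G) (hq : q ∈ G) :
    ∃ H : Set X, H ⊆ G ∧ IsGeodesicSegmentBetween H p q := by
  obtain ⟨u, v, a, b, γ, hab, hiso, him, ha, hb⟩ := h
  rw [← him] at hp hq
  obtain ⟨s, hs, rfl⟩ := hp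
  obtain ⟨t, ht, rfl⟩ := hq
  rcases le_total s t with hst | hts
  · refine ⟨γ '' Icc s t, ?_, s, t, γ, hst, ?_, rfl, rfl, rfl⟩
    · rw [← him]; exact image_mono (Icc_subset_Icc hs.1 ht.2)
    · intro u hu w hw
      exact hiso u ⟨hs.1.trans hu.1, hu.2.trans ht.2⟩ w ⟨hs.1.trans hw.1, hw.2.trans ht.2⟩
  · refine ⟨(fun u => γ (s + t - u)) '' Icc t s, ?_, t, s, fun u => γ (s + t - u), hts, ?_, ?_,
      by simp, by simp⟩
    · intro y hy
      obtain ⟨u, hu, rfl⟩ := hy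
      rw [← him]
      exact ⟨s + t - u, ⟨by linarith [hu.2, ht.1], by linarith [hu.1, hs.2]⟩, rfl⟩
    · intro u hu w hw
      rw [hiso _ ⟨by linarith [hu.2, ht.1], by linarith [hu.1, hs.2]⟩
        _ ⟨by linarith [hw.2, ht.1], by linarith [hw.1, hs.2]⟩]
      rw [abs_sub_comm]; ring_nf
    · rfl

/-- Lemma 5.4: let `z'` be a nearest point to `z` on a geodesic segment `ζ`,
let `x ∈ ζ`, let `σ` be a geodesic from `z` to `z'`, and let `x'` be a nearest
point to `x` on `σ`.  Then `dist z' x' ≤ 6δ`. -/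
theorem nearest_point_on_projection_segment
    {X : Type*} [MetricSpace X] (δ : ℝ) (hδ : 0 ≤ δ)
    (hgeo : GeodesicMetricSpace X) (hhyp : IsDeltaHyperbolic X δ)
    (ζ : Set X) (hζ : IsGeodesicSegment ζ)
    (z z' : X) (hz' : IsNearestPointOn z ζ z')
    (x : X) (hx : x ∈ ζ)
    (σ : Set X) (hσ : IsGeodesicSegmentBetween σ z z')
    (x' : X) (hx' : IsNearestPointOn x σ x') :
    dist z' x' ≤ 6 * δ := by
  -- a geodesic η ⊆ ζ from z' to x, and a geodesic G from z to x
  obtain ⟨η, hηζ, hη⟩ := geo_subsegment hζ hz'.1 hx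
  obtain ⟨G, hG⟩ := hgeo z x
  obtain ⟨h1, -, -⟩ := hhyp z z' x σ η G hσ hη hG
  obtain ⟨a₀, b₀, γ, hab, hiso, him, hza, hzb⟩ := id hσ
  have hcont : ContinuousOn γ (Set.Icc a₀ b₀) := iso_continuousOn hiso
  have hηc : IsCompact η := geo_compact hη
  have hGc : IsCompact G := geo_compact hG
  have hηne : η.Nonempty := ⟨z', geo_mem_left hη⟩
  have hGne : G.Nonempty := ⟨z, geo_mem_left hG⟩
  set A := Set.Icc a₀ b₀ ∩ (fun s => Metric.infDist (γ s) η) ⁻¹' Set.Iic δ with hA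
  set B := Set.Icc a₀ b₀ ∩ (fun s => Metric.infDist (γ s) G) ⁻¹' Set.Iic δ with hB
  have hAc : IsClosed A :=
    (((Metric.continuous_infDist_pt η).comp_continuousOn
      hcont).preimage_isClosed_of_isClosed isClosed_Icc isClosed_Iic)
  have hBc : IsClosed B :=
    (((Metric.continuous_infDist_pt G).comp_continuousOn
      hcont).preimage_isClosed_of_isClosed isClosed_Icc isClosed_Iic)
  have hcover : Set.Icc a₀ b₀ ⊆ A ∪ B := by
    intro s hs
    obtain ⟨q, hq, hdq⟩ := h1 (γ s) (him ▸ Set.mem_image_of_mem γ hs)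
    rcases hq with h | h
    · exact Or.inl ⟨hs, (Metric.infDist_le_dist_of_mem h).trans hdq⟩
    · exact Or.inr ⟨hs, (Metric.infDist_le_dist_of_mem h).trans hdq⟩
  have hbA : b₀ ∈ Set.Icc a₀ b₀ ∩ A := by
    refine ⟨⟨hab, le_refl b₀⟩, ⟨hab, le_refl b₀⟩, ?_⟩
    show Metric.infDist (γ b₀) η ≤ δ
    rw [hzb]
    calc Metric.infDist z' η ≤ dist z' z' :=
          Metric.infDist_le_dist_of_mem (geo_mem_left hη)
      _ = 0 := dist_self z'
      _ ≤ δ := hδ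
  have haB : a₀ ∈ Set.Icc a₀ b₀ ∩ B := by
    refine ⟨⟨le_refl a₀, hab⟩, ⟨le_refl a₀, hab⟩, ?_⟩
    show Metric.infDist (γ a₀) G ≤ δ
    rw [hza]
    calc Metric.infDist z G ≤ dist z z :=
          Metric.infDist_le_dist_of_mem (geo_mem_left hG)
      _ = 0 := dist_self z
      _ ≤ δ := hδ
  obtain ⟨s₀, hsIcc, hsA, hsB⟩ :=
    isPreconnected_closed_iff.mp isPreconnected_Icc A B hAc hBc hcover ⟨b₀, hbA⟩ ⟨a₀, haB⟩
  -- the point p = γ s₀ on σ is δ-close to both η and G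
  obtain ⟨q, hqη, hq⟩ := hηc.exists_infDist_eq_dist hηne (γ s₀)
  obtain ⟨r, hrG, hr⟩ := hGc.exists_infDist_eq_dist hGne (γ s₀)
  have hpq : dist (γ s₀) q ≤ δ := by rw [← hq]; exact hsA.2
  have hpr : dist (γ s₀) r ≤ δ := by rw [← hr]; exact hsB.2
  have hpσ : γ s₀ ∈ σ := him ▸ Set.mem_image_of_mem γ hsIcc
  -- collect the metric facts and finish by linear arithmetic
  have F1 : dist z (γ s₀) + dist (γ s₀) z' = dist z z' := geo_dist_add hσ hpσ
  have F2 : dist z x' + dist x' z' = dist z z' := geo_dist_add hσ hx'.1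
  have F3 : dist z r + dist r x = dist z x := geo_dist_add hG hrG
  have F4 : dist z z' ≤ dist z q := hz'.2 q (hηζ hqη)
  have F5 : dist x x' ≤ dist x (γ s₀) := hx'.2 _ hpσ
  have T1 : dist z q ≤ dist z (γ s₀) + dist (γ s₀) q := dist_triangle z (γ s₀) q
  have T2 : dist z (γ s₀) ≤ dist z r + dist r (γ s₀) := dist_triangle z r (γ s₀)
  have T3 : dist x (γ s₀) ≤ dist x r + dist r (γ s₀) := dist_triangle x r (γ s₀)
  have T4 : dist z x ≤ dist z x' + dist x' x := dist_triangle z x' x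
  have C1 : dist r (γ s₀) = dist (γ s₀) r := dist_comm r (γ s₀)
  have C2 : dist x' x = dist x x' := dist_comm x' x
  have C3 : dist r x = dist x r := dist_comm r x
  have C4 : dist z' x' = dist x' z' := dist_comm z' x'
  linarith
end

section
/- Let δ ≥ 0 and D ≥ 0, and let X be a δ-hyperbolic geodesic metric space. Let f and f' be geodesic segments in X that are at Hausdorff distance at most D from each other. Let p be a point of X, let u be a nearest point to p on f, and let û be a nearest point to p on f'. Then dist û u ≤ 3D + 6δ. (Lemma 5.6 of the paper.) -/
/-- Two subsets are at Hausdorff distance at most `D`. -/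
def HausdorffDistLE {X : Type*} [MetricSpace X] (D : ℝ) (A B : Set X) : Prop :=
  (∀ a ∈ A, ∃ b ∈ B, dist a b ≤ D) ∧ (∀ b ∈ B, ∃ a ∈ A, dist a b ≤ D)

lemma subsegment_aux {X : Type*} [MetricSpace X] {f : Set X} (hf : IsGeodesicSegment f)
    {u w : X} (hu : u ∈ f) (hw : w ∈ f) :
    ∃ g, IsGeodesicSegmentBetween g u w ∧ g ⊆ f := by
  obtain ⟨x, y, a, b, γ, hab, hiso, him, ha, hb⟩ := hf
  rw [← him] at hu hw
  obtain ⟨s, hs, rfl⟩ := hu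
  obtain ⟨t, ht, rfl⟩ := hw
  rcases le_total s t with hst | hst
  · refine ⟨γ '' Set.Icc s t, ⟨s, t, γ, hst, ?_, rfl, rfl, rfl⟩, ?_⟩
    · intro r hr r' hr'
      exact hiso r ⟨le_trans hs.1 hr.1, le_trans hr.2 ht.2⟩ r'
        ⟨le_trans hs.1 hr'.1, le_trans hr'.2 ht.2⟩
    · rw [← him]
      exact Set.image_mono (Set.Icc_subset_Icc hs.1 ht.2)
  · refine ⟨γ '' Set.Icc t s, ⟨t, s, fun r => γ (s + t - r), hst, ?_, ?_, ?_, ?_⟩, ?_⟩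
    · intro r hr r' hr'
      have h1 : s + t - r ∈ Set.Icc a b :=
        ⟨le_trans ht.1 (by linarith [hr.2]), le_trans (by linarith [hr.1]) hs.2⟩
      have h2 : s + t - r' ∈ Set.Icc a b :=
        ⟨le_trans ht.1 (by linarith [hr'.2]), le_trans (by linarith [hr'.1]) hs.2⟩
      rw [hiso _ h1 _ h2, show s + t - r - (s + t - r') = r' - r by ring, abs_sub_comm]
    · ext z
      constructor
      · rintro ⟨r, hr, rfl⟩
        exact ⟨s + t - r, ⟨by linarith [hr.2], by linarith [hr.1]⟩, rfl⟩
      · rintro ⟨r, hr, rfl⟩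
        exact ⟨s + t - r, ⟨by linarith [hr.2], by linarith [hr.1]⟩,
          by show γ (s + t - (s + t - r)) = γ r; rw [show s + t - (s + t - r) = r by ring]⟩
    · show γ (s + t - t) = γ s; rw [show s + t - t = s by ring]
    · show γ (s + t - s) = γ t; rw [show s + t - s = t by ring]
    · rw [← him]
      exact Set.image_mono (Set.Icc_subset_Icc ht.1 hs.2)

/-- Key lemma: a nearest point `u` to `p` on a geodesic `f` is within `2δ + ε`
of any geodesic `h` from `p` to a point `w` of `f`; moreover the witness lies
"between" `p` and `w` metrically. -/
lemma nearest_near_geodesic_aux {X : Type*} [MetricSpace X] {δ : ℝ} (hδ : 0 ≤ δ)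
    (hgeo : GeodesicMetricSpace X) (hhyp : IsDeltaHyperbolic X δ)
    {f : Set X} (hf : IsGeodesicSegment f) {p u w : X}
    (hu : IsNearestPointOn p f u) (hw : w ∈ f)
    {h : Set X} (hh : IsGeodesicSegmentBetween h p w) {ε : ℝ} (hε : 0 < ε) :
    ∃ x ∈ h, dist u x ≤ 2 * δ + ε ∧ dist p x + dist x w = dist p w := by
  obtain ⟨ah, bh, γh, habh, hisoh, himh, hah, hbh⟩ := hh
  have hmem : ∀ x ∈ γh '' Set.Icc ah bh, dist p x + dist x w = dist p w := by
    rintro x ⟨r, hr, rfl⟩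
    have h1 : dist p (γh r) = r - ah := by
      rw [← hah, hisoh ah ⟨le_refl _, habh⟩ r hr, abs_of_nonpos (by linarith [hr.1])]; ring
    have h2 : dist (γh r) w = bh - r := by
      rw [← hbh, hisoh r hr bh ⟨habh, le_refl _⟩, abs_of_nonpos (by linarith [hr.2])]; ring
    have h3 : dist p w = bh - ah := by
      rw [← hah, ← hbh, hisoh ah ⟨le_refl _, habh⟩ bh ⟨habh, le_refl _⟩,
        abs_of_nonpos (by linarith)]; ring
    rw [h1, h2, h3]; ring
  have hph : p ∈ γh '' Set.Icc ah bh := ⟨ah, ⟨le_refl _, habh⟩, hah⟩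
  rcases le_or_gt (dist p u) (δ + ε) with hcase | hcase
  · refine ⟨p, himh ▸ hph, ?_, hmem p hph⟩
    rw [dist_comm]; linarith
  · -- geodesic k from p to u
    obtain ⟨k, hk⟩ := hgeo p u
    obtain ⟨g', hg', hg'f⟩ := subsegment_aux hf hu.1 hw
    obtain ⟨hthin, -, -⟩ := hhyp p u w k g' (γh '' Set.Icc ah bh) hk hg'
      ⟨ah, bh, γh, habh, hisoh, rfl, hah, hbh⟩
    obtain ⟨a, b, γ, hab, hiso, him, ha, hb⟩ := hk
    have hdpu : dist p u = b - a := by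
      rw [← ha, ← hb, hiso a ⟨le_refl _, hab⟩ b ⟨hab, le_refl _⟩,
        abs_of_nonpos (by linarith)]; ring
    set r : ℝ := b - (δ + ε) with hrdef
    have hrmem : r ∈ Set.Icc a b := ⟨by linarith [hdpu ▸ hcase], by linarith⟩
    have hxk : γ r ∈ k := him ▸ ⟨r, hrmem, rfl⟩
    have hdxu : dist (γ r) u = δ + ε := by
      rw [← hb, hiso r hrmem b ⟨hab, le_refl _⟩, abs_of_nonpos (by linarith)]; ring
    have hdpx : dist p (γ r) = dist p u - (δ + ε) := by
      have heq : dist (γ a) (γ r) = |a - r| := hiso a ⟨le_refl _, hab⟩ r hrmem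
      rw [ha] at heq
      rw [heq, abs_of_nonpos (by linarith [hrmem.1]), hdpu]; ring
    obtain ⟨q, hq, hdq⟩ := hthin (γ r) hxk
    rcases hq with hq | hq
    · -- q on the subsegment of f: contradiction with nearest point property
      exfalso
      have h1 : dist p u ≤ dist p q := hu.2 q (hg'f hq)
      have h2 : dist p q ≤ dist p (γ r) + dist (γ r) q := dist_triangle _ _ _
      linarith
    · refine ⟨q, himh ▸ hq, ?_, hmem q hq⟩
      have := dist_triangle u (γ r) q
      rw [dist_comm u (γ r)] at this
      linarith


/-- Lemma 5.6: if geodesic segments `f` and `f'` are at Hausdorff distance at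
most `D`, and `u`, `uhat` are nearest points to a point `p` on `f` and `f'`
respectively, then `dist uhat u ≤ 3D + 6δ`. -/
theorem nearest_points_on_fellow_traveling_geodesics
    {X : Type*} [MetricSpace X] (δ D : ℝ) (hδ : 0 ≤ δ) (hD : 0 ≤ D)
    (hgeo : GeodesicMetricSpace X) (hhyp : IsDeltaHyperbolic X δ)
    (f f' : Set X) (hf : IsGeodesicSegment f) (hf' : IsGeodesicSegment f')
    (hHaus : HausdorffDistLE D f f')
    (p u uhat : X) (hu : IsNearestPointOn p f u) (huhat : IsNearestPointOn p f' uhat) :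
    dist uhat u ≤ 3 * D + 6 * δ := by
  refine le_of_forall_pos_le_add fun ε hε => ?_
  obtain ⟨w, hwf, hw⟩ := hHaus.2 uhat huhat.1
  obtain ⟨v, hvf', hv⟩ := hHaus.1 u hu.1
  obtain ⟨h, hh⟩ := hgeo p w
  obtain ⟨x, hxh, hux, hadd⟩ :=
    nearest_near_geodesic_aux hδ hgeo hhyp hf hu hwf hh (half_pos hε)
  -- distance comparisons
  have h1 : dist p uhat ≤ dist p u + D := by
    have := huhat.2 v hvf'
    have := dist_triangle p u v
    linarith
  have h2 : dist p w ≤ dist p uhat + D := by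
    have := dist_triangle p uhat w
    rw [dist_comm uhat w] at this
    linarith
  have h3 : dist p u ≤ dist p x + dist u x := by
    have := dist_triangle p x u
    rw [dist_comm x u] at this
    linarith
  have h4 : dist uhat u ≤ dist uhat w + dist w x + dist x u := by
    have t1 := dist_triangle uhat x u
    have t2 := dist_triangle uhat w x
    linarith
  have h5 : dist w x = dist x w := dist_comm w x
  have h6 : dist x u = dist u x := dist_comm x u
  have h7 : dist uhat w = dist w uhat := dist_comm uhat w
  linarith
end

section
/- Let n be a positive integer, let ε be a real number, let L ≥ 0, and let g₁, …, g_n : ℝ → ℝ be convex functions. Let t₁ ≤ t₂ ≤ … ≤ t_{2n+1} be real numbers with t_{k+1} − t_k ≥ L for each 1 ≤ k ≤ 2n, and suppose that for each k ∈ {1, …, 2n+1} there exists an index i ∈ {1, …, n} with g_i(t_k) ≤ ε. Then there exist an index i ∈ {1, …, n} and indices k₁ < k₂ < k₃ in {1, …, 2n+1} such that g_i(t) ≤ ε for every t ∈ [t_{k₁}, t_{k₃}]; in particular, g_i ≤ ε on an interval of length at least 2L. (This is the pigeonhole-plus-convexity argument of Claim 'ashcl' in the proof of Lemma 7.6 of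 the paper, with g_i playing the role of the length-functions t ↦ ℓ_{α_i}(g(t)) of the boundary curves, which are convex along Weil–Petersson geodesics.) -/
/-- Pigeonhole plus convexity: given `n` convex functions and `2n+1` sample
points `t₁ ≤ … ≤ t_{2n+1}` with consecutive gaps at least `L`, such that at
each sample point some function is at most `ε`, there is a single function `i`
and indices `k₁ < k₂ < k₃` with `g i ≤ ε` on the whole interval
`[t k₁, t k₃]`, an interval of length at least `2L`. -/
theorem convex_pigeonhole_interval
    (n : ℕ) (hn : 0 < n) (ε L : ℝ) (hL : 0 ≤ L)
    (g : Fin n → ℝ → ℝ) (hconv : ∀ i, ConvexOn ℝ Set.univ (g i))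
    (t : Fin (2 * n + 1) → ℝ)
    (hmono : ∀ k l : Fin (2 * n + 1), k ≤ l → t k ≤ t l)
    (hgap : ∀ k : Fin (2 * n + 1), ∀ hk : (k : ℕ) + 1 < 2 * n + 1,
      L ≤ t ⟨(k : ℕ) + 1, hk⟩ - t k)
    (hshort : ∀ k : Fin (2 * n + 1), ∃ i : Fin n, g i (t k) ≤ ε) :
    ∃ i : Fin n, ∃ k₁ k₂ k₃ : Fin (2 * n + 1), k₁ < k₂ ∧ k₂ < k₃ ∧
      (∀ s ∈ Set.Icc (t k₁) (t k₃), g i s ≤ ε) ∧ 2 * L ≤ t k₃ - t k₁ := by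
  -- step lemma: k < l → L ≤ t l - t k
  have step : ∀ k l : Fin (2 * n + 1), k < l → L ≤ t l - t k := by
    intro k l hkl
    have h1 : (k : ℕ) + 1 < 2 * n + 1 := lt_of_le_of_lt hkl l.isLt
    have h2 : (⟨(k : ℕ) + 1, h1⟩ : Fin (2 * n + 1)) ≤ l := hkl
    have := hgap k h1
    have := hmono _ _ h2
    linarith
  choose f hf using hshort
  have hcard : Fintype.card (Fin n) * 2 < Fintype.card (Fin (2 * n + 1)) := by
    simp; omega
  obtain ⟨i, hi⟩ := Fintype.exists_lt_card_fiber_of_mul_lt_card f hcard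
  set S := Finset.filter (fun k => f k = i) Finset.univ with hS
  have h3 : 3 ≤ S.card := hi
  have hne : S.Nonempty := Finset.card_pos.mp (by omega)
  set k₁ := S.min' hne
  set k₃ := S.max' hne
  have hmem : ∀ k ∈ S, g i (t k) ≤ ε := by
    intro k hk
    have : f k = i := (Finset.mem_filter.mp hk).2
    rw [← this]; exact hf k
  have hSsub : (S \ {k₁, k₃}).Nonempty := by
    apply Finset.card_pos.mp
    have h2 : (({k₁, k₃} : Finset (Fin (2 * n + 1)))).card ≤ 2 :=
      Finset.card_insert_le _ _ |>.trans (by simp)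
    have := Finset.le_card_sdiff ({k₁, k₃} : Finset _) S
    omega
  obtain ⟨k₂, hk₂⟩ := hSsub
  obtain ⟨hk₂S, hk₂ne⟩ := Finset.mem_sdiff.mp hk₂
  simp only [Finset.mem_insert, Finset.mem_singleton] at hk₂ne
  push_neg at hk₂ne
  have hk₁S : k₁ ∈ S := S.min'_mem hne
  have hk₃S : k₃ ∈ S := S.max'_mem hne
  have h12 : k₁ < k₂ := lt_of_le_of_ne (S.min'_le _ hk₂S) (Ne.symm hk₂ne.1)
  have h23 : k₂ < k₃ := lt_of_le_of_ne (S.le_max' _ hk₂S) hk₂ne.2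
  refine ⟨i, k₁, k₂, k₃, h12, h23, ?_, ?_⟩
  · intro s hs
    have hseg : s ∈ segment ℝ (t k₁) (t k₃) := by
      rw [segment_eq_Icc (hmono _ _ (le_of_lt (h12.trans h23)))]; exact hs
    have := (hconv i).le_on_segment (Set.mem_univ (t k₁)) (Set.mem_univ (t k₃)) hseg
    calc g i s ≤ max (g i (t k₁)) (g i (t k₃)) := this
      _ ≤ ε := max_le (hmem _ hk₁S) (hmem _ hk₃S)
  · have := step k₁ k₂ h12
    have := step k₂ k₃ h23
    linarith
end
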